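/- Let β₀, β₁, β₂, β₃, ρ₀, ρ₁, ρ₂, ρ₃ ∈ ℝ. Define R(t) = β₃t³ + β₂t² + β₁t + β₀ and S(t) = −4t⁴ + ρ₃t³ + ρ₂t² + ρ₁t + ρ₀. Let y be three times differentiable on an open interval I ⊆ ℝ with y'(x) ≠ 0, y(x) ≠ 0, R(y(x)) ≠ 0, and (y'(x))² = 4·y(x)²/R(y(x)) for all x ∈ I. Then for every x ∈ I (writing y = y(x)): −S(y)/R(y) − (1/2)·{y,x}(x) = (y²/R(y)²)·[ R''(y) + R'(y)/y + R(y)/y² − (5/4)·R'(y)²/R(y) ] − S(y)/R(y). -/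

import Mathlib

/-!
If `y'² = F(y)`, differentiating gives `y'' = F'(y)/2`, hence `y''/y' = F'(y)/(2y')` and the
Schwarzian derivative of `y` is `F''(y)/2 - 3F'(y)²/(8F(y))`, a function of `y` alone.
For `F(t) = 4t²/R(t)` this expands to the stated rational expression in `R, R', R''`.
-/

/-- The polynomial `R` of the biconfluent-Heun-class Bose invariant. -/
def bcheunR (β₀ β₁ β₂ β₃ : ℝ) : ℝ → ℝ := fun t =>
  β₃ * t ^ 3 + β₂ * t ^ 2 + β₁ * t + β₀

/-- The polynomial `S` of the biconfluent-Heun-class Bose invariant. -/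
def bcheunS (ρ₀ ρ₁ ρ₂ ρ₃ : ℝ) : ℝ → ℝ := fun t =>
  -4 * t ^ 4 + ρ₃ * t ^ 3 + ρ₂ * t ^ 2 + ρ₁ * t + ρ₀

open Filter Topology

noncomputable def schwarzian (y : ℝ → ℝ) (x : ℝ) : ℝ :=
  deriv (fun t => deriv (deriv y) t / deriv y t) x - 1 / 2 * (deriv (deriv y) x / deriv y x) ^ 2

theorem deriv_deriv_eq_of_sq_deriv_eq {y F : ℝ → ℝ} {x : ℝ}
    (hy : DifferentiableAt ℝ y x) (hy' : DifferentiableAt ℝ (deriv y) x)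
    (hF : DifferentiableAt ℝ F (y x)) (hx : deriv y x ≠ 0)
    (heq : ∀ᶠ z in 𝓝 x, deriv y z ^ 2 = F (y z)) :
    deriv (deriv y) x = deriv F (y x) / 2 := by
  have h₁ : HasDerivAt (fun z => deriv y z ^ 2) (2 * deriv y x * deriv (deriv y) x) x := by
    refine (hy'.hasDerivAt.fun_pow 2).congr_deriv ?_
    push_cast
    ring
  have h₂ : HasDerivAt (fun z => deriv y z ^ 2) (deriv F (y x) * deriv y x) x :=
    (hF.hasDerivAt.comp x hy.hasDerivAt).congr_of_eventuallyEq heq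
  have := h₁.unique h₂
  apply mul_left_cancel₀ hx
  linarith

theorem schwarzian_eq_of_sq_deriv_eq {y F : ℝ → ℝ} {x : ℝ}
    (hy : ∀ᶠ z in 𝓝 x, DifferentiableAt ℝ y z) (hy' : ∀ᶠ z in 𝓝 x, DifferentiableAt ℝ (deriv y) z)
    (hF : ∀ᶠ s in 𝓝 (y x), DifferentiableAt ℝ F s) (hF' : DifferentiableAt ℝ (deriv F) (y x))
    (hx : deriv y x ≠ 0) (heq : ∀ᶠ z in 𝓝 x, deriv y z ^ 2 = F (y z)) :
    schwarzian y x = deriv (deriv F) (y x) / 2 - 3 / 8 * deriv F (y x) ^ 2 / F (y x) := by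
  have hFy : ∀ᶠ z in 𝓝 x, DifferentiableAt ℝ F (y z) :=
    hy.self_of_nhds.continuousAt.tendsto.eventually hF
  have hne : ∀ᶠ z in 𝓝 x, deriv y z ≠ 0 := hy'.self_of_nhds.continuousAt.eventually_ne hx
  have hquot : (fun z => deriv (deriv y) z / deriv y z)
      =ᶠ[𝓝 x] fun z => deriv F (y z) / 2 / deriv y z := by
    filter_upwards [hy, hy', hFy, hne, heq.eventually_nhds] with z hyz hy'z hFz hz heqz
    rw [deriv_deriv_eq_of_sq_deriv_eq hyz hy'z hFz hz heqz]
  have hd := (((hF'.hasDerivAt.comp x hy.self_of_nhds.hasDerivAt).div_const 2).div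
    hy'.self_of_nhds.hasDerivAt hx).congr_of_eventuallyEq hquot
  have hy'' := deriv_deriv_eq_of_sq_deriv_eq hy.self_of_nhds hy'.self_of_nhds hF.self_of_nhds hx heq
  have hFx : F (y x) = deriv y x ^ 2 := heq.self_of_nhds.symm
  rw [schwarzian, hd.deriv, hy'', hFx, Function.comp_apply]
  field_simp
  ring

theorem hasDerivAt_sq_div {R : ℝ → ℝ} {t : ℝ} (hR : DifferentiableAt ℝ R t) (ht : R t ≠ 0) :
    HasDerivAt (fun s => 4 * s ^ 2 / R s) ((8 * t * R t - 4 * t ^ 2 * deriv R t) / R t ^ 2) t := by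
  refine (((hasDerivAt_pow 2 t).const_mul 4).fun_div hR.hasDerivAt ht).congr_deriv ?_
  push_cast
  ring

theorem hasDerivAt_deriv_sq_div {R : ℝ → ℝ} {t : ℝ} (hR : ContDiff ℝ 2 R) (ht : R t ≠ 0) :
    HasDerivAt (deriv fun s => 4 * s ^ 2 / R s)
      (((8 * R t - 4 * t ^ 2 * deriv (deriv R) t) * R t
        - 2 * (8 * t * R t - 4 * t ^ 2 * deriv R t) * deriv R t) / R t ^ 3) t := by
  have hR₁ : Differentiable ℝ R := hR.differentiable (by norm_num)
  have hR₂ : Differentiable ℝ (deriv R) := hR.differentiable_deriv_two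
  have hderiv : (deriv fun s => 4 * s ^ 2 / R s)
      =ᶠ[𝓝 t] fun s => (8 * s * R s - 4 * s ^ 2 * deriv R s) / R s ^ 2 := by
    filter_upwards [hR₁.continuous.continuousAt.eventually_ne ht] with s hs
    exact (hasDerivAt_sq_div (hR₁ s) hs).deriv
  have hnum : HasDerivAt (fun s => 8 * s * R s - 4 * s ^ 2 * deriv R s)
      (8 * R t - 4 * t ^ 2 * deriv (deriv R) t) t := by
    refine ((((hasDerivAt_id' t).const_mul 8).fun_mul (hR₁ t).hasDerivAt).fun_sub
      (((hasDerivAt_pow 2 t).const_mul 4).fun_mul (hR₂ t).hasDerivAt)).congr_deriv ?_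
    push_cast
    ring
  refine ((hnum.fun_div ((hR₁ t).hasDerivAt.fun_pow 2) (pow_ne_zero 2 ht)).congr_of_eventuallyEq
    hderiv).congr_deriv ?_
  field_simp
  ring

theorem neg_half_schwarzian_eq_of_sq_deriv_eq_sq_div {y R : ℝ → ℝ} {x : ℝ} (hR : ContDiff ℝ 2 R)
    (hy : ∀ᶠ z in 𝓝 x, DifferentiableAt ℝ y z) (hy' : ∀ᶠ z in 𝓝 x, DifferentiableAt ℝ (deriv y) z)
    (hx : deriv y x ≠ 0) (heq : ∀ᶠ z in 𝓝 x, deriv y z ^ 2 = 4 * y z ^ 2 / R (y z)) :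
    -(1 / 2) * schwarzian y x = y x ^ 2 / R (y x) ^ 2 * (deriv (deriv R) (y x)
      + deriv R (y x) / y x + R (y x) / y x ^ 2 - 5 / 4 * deriv R (y x) ^ 2 / R (y x)) := by
  have hF : 4 * y x ^ 2 / R (y x) ≠ 0 := heq.self_of_nhds ▸ pow_ne_zero 2 hx
  obtain ⟨hyx, hRyx⟩ : y x ≠ 0 ∧ R (y x) ≠ 0 :=
    ⟨fun h => hF (by simp [h]), fun h => hF (by simp [h])⟩
  have hR₁ : Differentiable ℝ R := hR.differentiable (by norm_num)
  have hFdiff : ∀ᶠ s in 𝓝 (y x), DifferentiableAt ℝ (fun s => 4 * s ^ 2 / R s) s := by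
    filter_upwards [hR₁.continuous.continuousAt.eventually_ne hRyx] with s hs
    exact (hasDerivAt_sq_div (hR₁ s) hs).differentiableAt
  rw [schwarzian_eq_of_sq_deriv_eq hy hy' hFdiff
    (hasDerivAt_deriv_sq_div hR hRyx).differentiableAt hx heq,
    (hasDerivAt_deriv_sq_div hR hRyx).deriv, (hasDerivAt_sq_div (hR₁ _) hRyx).deriv]
  field_simp
  ring

theorem stmt_16_general (β₀ β₁ β₂ β₃ ρ₀ ρ₁ ρ₂ ρ₃ : ℝ)
    (y : ℝ → ℝ) (I : Set ℝ) (hI : IsOpen I)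
    (hy : ∀ x ∈ I, DifferentiableAt ℝ y x)
    (hy' : ∀ x ∈ I, DifferentiableAt ℝ (deriv y) x)
    (hy0 : ∀ x ∈ I, deriv y x ≠ 0)
    (heq : ∀ x ∈ I, (deriv y x) ^ 2 = 4 * (y x) ^ 2 / bcheunR β₀ β₁ β₂ β₃ (y x)) :
    ∀ x ∈ I,
      -(bcheunS ρ₀ ρ₁ ρ₂ ρ₃ (y x)) / bcheunR β₀ β₁ β₂ β₃ (y x)
          - (1 / 2) * (deriv (fun t => deriv (deriv y) t / deriv y t) x
              - (1 / 2) * (deriv (deriv y) x / deriv y x) ^ 2)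
        = ((y x) ^ 2 / (bcheunR β₀ β₁ β₂ β₃ (y x)) ^ 2) *
            (deriv (deriv (bcheunR β₀ β₁ β₂ β₃)) (y x)
              + deriv (bcheunR β₀ β₁ β₂ β₃) (y x) / y x
              + bcheunR β₀ β₁ β₂ β₃ (y x) / (y x) ^ 2
              - (5 / 4) * (deriv (bcheunR β₀ β₁ β₂ β₃) (y x)) ^ 2
                / bcheunR β₀ β₁ β₂ β₃ (y x))
          - bcheunS ρ₀ ρ₁ ρ₂ ρ₃ (y x) / bcheunR β₀ β₁ β₂ β₃ (y x) := by
  intro x hx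
  have hR : ContDiff ℝ 2 (bcheunR β₀ β₁ β₂ β₃) := by
    unfold bcheunR
    fun_prop
  have hI_x : ∀ᶠ z in 𝓝 x, z ∈ I := hI.mem_nhds hx
  have key := neg_half_schwarzian_eq_of_sq_deriv_eq_sq_div hR (hI_x.mono hy) (hI_x.mono hy')
    (hy0 x hx) (hI_x.mono heq)
  rw [schwarzian] at key
  linear_combination key

/-- closed form of the potential of the biconfluent Heun class. -/
theorem stmt_16 (β₀ β₁ β₂ β₃ ρ₀ ρ₁ ρ₂ ρ₃ : ℝ)
    (y : ℝ → ℝ) (I : Set ℝ) (hI : IsOpen I)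
    (hy : ∀ x ∈ I, DifferentiableAt ℝ y x)
    (hy' : ∀ x ∈ I, DifferentiableAt ℝ (deriv y) x)
    (hy'' : ∀ x ∈ I, DifferentiableAt ℝ (deriv (deriv y)) x)
    (hy0 : ∀ x ∈ I, deriv y x ≠ 0)
    (hyne : ∀ x ∈ I, y x ≠ 0)
    (hR : ∀ x ∈ I, bcheunR β₀ β₁ β₂ β₃ (y x) ≠ 0)
    (heq : ∀ x ∈ I, (deriv y x) ^ 2 = 4 * (y x) ^ 2 / bcheunR β₀ β₁ β₂ β₃ (y x)) :
    ∀ x ∈ I,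
      -(bcheunS ρ₀ ρ₁ ρ₂ ρ₃ (y x)) / bcheunR β₀ β₁ β₂ β₃ (y x)
          - (1 / 2) * (deriv (fun t => deriv (deriv y) t / deriv y t) x
              - (1 / 2) * (deriv (deriv y) x / deriv y x) ^ 2)
        = ((y x) ^ 2 / (bcheunR β₀ β₁ β₂ β₃ (y x)) ^ 2) *
            (deriv (deriv (bcheunR β₀ β₁ β₂ β₃)) (y x)
              + deriv (bcheunR β₀ β₁ β₂ β₃) (y x) / y x
              + bcheunR β₀ β₁ β₂ β₃ (y x) / (y x) ^ 2
              - (5 / 4) * (deriv (bcheunR β₀ β₁ β₂ β₃) (y x)) ^ 2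
                / bcheunR β₀ β₁ β₂ β₃ (y x))
          - bcheunS ρ₀ ρ₁ ρ₂ ρ₃ (y x) / bcheunR β₀ β₁ β₂ β₃ (y x) :=
  stmt_16_general β₀ β₁ β₂ β₃ ρ₀ ρ₁ ρ₂ ρ₃ y I hI hy hy' hy0 heq
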